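/- arXiv:1805.01119 — 2 statements merged into one kernel-verified Lean document; each statement's English description precedes it below -/
import Mathlib

section
/- For every real $\Delta \ge 0.02$ and every $\xi$ with $0 < \xi < \Delta$, one has $\sum_{k \in \mathbb{Z}, k \ne 0} \frac{|k+1|}{|\xi + k\Delta|} e^{-2\pi|\xi + k\Delta|} \le C e^{-2\pi\Delta}$ for some absolute constant $C$ (independent of $\Delta$ and $\xi$). -/
open Real

set_option maxHeartbeats 1000000

theorem stmt_8 : ∃ C : ℝ, ∀ Δ ξ : ℝ, 0.02 ≤ Δ → 0 < ξ → ξ < Δ →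
    ∑' k : {k : ℤ // k ≠ 0},
        |((k : ℤ) : ℝ) + 1| / |ξ + ((k : ℤ) : ℝ) * Δ| *
          Real.exp (-2 * π * |ξ + ((k : ℤ) : ℝ) * Δ|) ≤
      C * Real.exp (-2 * π * Δ) := by
  have hπ := Real.pi_pos
  set r : ℝ := Real.exp (-(0.04) * π) with hrdef
  have hr0 : 0 < r := Real.exp_pos _
  have hr1 : r < 1 := by
    rw [hrdef, Real.exp_lt_one_iff]
    nlinarith
  have hrinv : 1 ≤ r⁻¹ := by
    have h := mul_inv_cancel₀ hr0.ne'
    nlinarith [inv_pos.mpr hr0]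
  -- auxiliary exponential bound
  have aux : ∀ (Δ : ℝ) (j : ℕ), 0.02 ≤ Δ →
      Real.exp (-2 * π * (Δ * (j + 1))) ≤ Real.exp (-2 * π * Δ) * r ^ j := by
    intro Δ j hΔ
    calc Real.exp (-2 * π * (Δ * (j + 1)))
        = Real.exp (-2 * π * Δ) * Real.exp (-2 * π * Δ * j) := by
          rw [← Real.exp_add]; congr 1; ring
      _ ≤ Real.exp (-2 * π * Δ) * r ^ j := by
          apply mul_le_mul_of_nonneg_left _ (Real.exp_nonneg _)
          rw [hrdef, ← Real.exp_nat_mul]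
          apply Real.exp_le_exp.mpr
          have hj : (0 : ℝ) ≤ j := Nat.cast_nonneg j
          nlinarith [mul_le_mul_of_nonneg_left (mul_le_mul_of_nonneg_right hΔ hj) hπ.le]
  -- pointwise bound
  have key : ∀ (Δ ξ : ℝ), 0.02 ≤ Δ → 0 < ξ → ξ < Δ → ∀ k : ℤ, k ≠ 0 →
      |(k : ℝ) + 1| / |ξ + (k : ℝ) * Δ| * Real.exp (-2 * π * |ξ + (k : ℝ) * Δ|) ≤
        100 * r⁻¹ ^ 2 * (Real.exp (-2 * π * Δ) * r ^ k.natAbs) := by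
    intro Δ ξ hΔ hξ hξΔ k hk
    have hΔ0 : (0 : ℝ) < Δ := lt_of_lt_of_le (by norm_num) hΔ
    have hE : (0 : ℝ) < Real.exp (-2 * π * Δ) := Real.exp_pos _
    set m : ℕ := k.natAbs with hmdef
    rcases lt_or_gt_of_ne hk with hneg | hpos
    · -- k < 0
      rcases eq_or_lt_of_le (Int.lt_iff_add_one_le.mp hneg) with h1 | h2
      · -- k = -1
        have : (k : ℝ) = -1 := by
          have : k = -1 := by omega
          simp [this]
        rw [this]
        simp only [neg_add_cancel, abs_zero, zero_div, zero_mul]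
        positivity
      · -- k ≤ -2
        have hk2 : k ≤ -2 := by omega
        have hm2 : 2 ≤ m := by omega
        have hmk : (m : ℝ) = -(k : ℝ) := by
          have : (m : ℤ) = -k := by omega
          exact_mod_cast congrArg (Int.cast : ℤ → ℝ) this
        have hm2' : (2 : ℝ) ≤ (m : ℝ) := by exact_mod_cast hm2
        set x : ℝ := ξ + (k : ℝ) * Δ with hxdef
        have hxneg : x = ξ - (m : ℝ) * Δ := by rw [hxdef, hmk]; ring
        have habs : |x| = (m : ℝ) * Δ - ξ := by
          rw [abs_of_nonpos] <;> nlinarith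
        have hlb : ((m : ℝ) - 1) * Δ ≤ |x| := by rw [habs]; nlinarith
        have hlb0 : (0 : ℝ) < ((m : ℝ) - 1) * Δ := by nlinarith
        have habsk : |(k : ℝ) + 1| = (m : ℝ) - 1 := by
          rw [abs_of_nonpos] <;> nlinarith
        obtain ⟨j, hj⟩ : ∃ j : ℕ, m = j + 2 := ⟨m - 2, by omega⟩
        have hfrac : |(k : ℝ) + 1| / |x| ≤ 50 := by
          rw [habsk, div_le_iff₀ (lt_of_lt_of_le hlb0 hlb)]
          nlinarith
        have hexp : Real.exp (-2 * π * |x|) ≤ Real.exp (-2 * π * Δ) * r ^ j := by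
          calc Real.exp (-2 * π * |x|) ≤ Real.exp (-2 * π * (Δ * (j + 1))) := by
                apply Real.exp_le_exp.mpr
                have h3 : (Δ * (j + 1)) ≤ |x| := by
                  rw [hj] at hlb; push_cast at hlb ⊢; nlinarith
                have := mul_le_mul_of_nonneg_left h3 (by positivity : (0:ℝ) ≤ 2 * π)
                linarith
            _ ≤ _ := aux Δ j hΔ
        have hrj : r ^ j = r ^ m * r⁻¹ ^ 2 := by
          rw [hj, pow_add]; field_simp
        calc |(k : ℝ) + 1| / |x| * Real.exp (-2 * π * |x|)
            ≤ 50 * (Real.exp (-2 * π * Δ) * r ^ j) := by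
              apply mul_le_mul hfrac hexp (Real.exp_nonneg _) (by norm_num)
          _ ≤ 100 * r⁻¹ ^ 2 * (Real.exp (-2 * π * Δ) * r ^ m) := by
              rw [hrj]
              have h0 : (0 : ℝ) ≤ Real.exp (-2 * π * Δ) * r ^ m * r⁻¹ ^ 2 := by positivity
              nlinarith [h0]
    · -- k ≥ 1
      have hk1 : 1 ≤ k := hpos
      have hm1 : 1 ≤ m := by omega
      have hmk : (m : ℝ) = (k : ℝ) := by
        have : (m : ℤ) = k := by omega
        exact_mod_cast congrArg (Int.cast : ℤ → ℝ) this
      have hm1' : (1 : ℝ) ≤ (m : ℝ) := by exact_mod_cast hm1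
      set x : ℝ := ξ + (k : ℝ) * Δ with hxdef
      have hxpos : (0 : ℝ) < x := by rw [hxdef, ← hmk]; nlinarith
      have habs : |x| = x := abs_of_pos hxpos
      have hlb : (m : ℝ) * Δ ≤ |x| := by rw [habs, hxdef, ← hmk]; nlinarith
      have habsk : |(k : ℝ) + 1| = (m : ℝ) + 1 := by
        rw [← hmk, abs_of_pos] <;> nlinarith
      obtain ⟨j, hj⟩ : ∃ j : ℕ, m = j + 1 := ⟨m - 1, by omega⟩
      have hfrac : |(k : ℝ) + 1| / |x| ≤ 100 := by
        rw [habsk, div_le_iff₀ (lt_of_lt_of_le (by nlinarith) hlb)]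
        nlinarith
      have hexp : Real.exp (-2 * π * |x|) ≤ Real.exp (-2 * π * Δ) * r ^ j := by
        calc Real.exp (-2 * π * |x|) ≤ Real.exp (-2 * π * (Δ * (j + 1))) := by
              apply Real.exp_le_exp.mpr
              have h3 : (Δ * (j + 1)) ≤ |x| := by
                rw [hj] at hlb; push_cast at hlb ⊢; nlinarith
              have := mul_le_mul_of_nonneg_left h3 (by positivity : (0:ℝ) ≤ 2 * π)
              linarith
          _ ≤ _ := aux Δ j hΔ
      have hrj : r ^ j = r ^ m * r⁻¹ := by
        rw [hj, pow_add]; field_simp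
      calc |(k : ℝ) + 1| / |x| * Real.exp (-2 * π * |x|)
          ≤ 100 * (Real.exp (-2 * π * Δ) * r ^ j) := by
            apply mul_le_mul hfrac hexp (Real.exp_nonneg _) (by norm_num)
        _ ≤ 100 * r⁻¹ ^ 2 * (Real.exp (-2 * π * Δ) * r ^ m) := by
            rw [hrj]
            have h1 : (0 : ℝ) < r ^ m := pow_pos hr0 m
            have h2 : r⁻¹ ≤ r⁻¹ ^ 2 := by nlinarith [hrinv]
            nlinarith [mul_le_mul_of_nonneg_left h2 (mul_nonneg hE.le h1.le)]
  -- summability of the geometric majorant over ℤ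
  have hS : Summable (fun k : ℤ => r ^ k.natAbs) := by
    apply Summable.of_nat_of_neg
    · simpa using summable_geometric_of_lt_one hr0.le hr1
    · simpa using summable_geometric_of_lt_one hr0.le hr1
  refine ⟨100 * r⁻¹ ^ 2 * ∑' k : ℤ, r ^ k.natAbs, ?_⟩
  intro Δ ξ hΔ hξ hξΔ
  have hE : (0 : ℝ) < Real.exp (-2 * π * Δ) := Real.exp_pos _
  have hgsum : Summable (fun k : {k : ℤ // k ≠ 0} =>
      100 * r⁻¹ ^ 2 * (Real.exp (-2 * π * Δ) * r ^ ((k : ℤ)).natAbs)) := by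
    apply Summable.mul_left
    apply Summable.mul_left
    exact hS.subtype _
  have hfsum : Summable (fun k : {k : ℤ // k ≠ 0} =>
      |((k : ℤ) : ℝ) + 1| / |ξ + ((k : ℤ) : ℝ) * Δ| *
        Real.exp (-2 * π * |ξ + ((k : ℤ) : ℝ) * Δ|)) := by
    exact Summable.of_nonneg_of_le (fun k : {k : ℤ // k ≠ 0} => by positivity)
      (fun k => key Δ ξ hΔ hξ hξΔ (k : ℤ) k.2) hgsum
  have hsubS : Summable (fun k : {k : ℤ // k ≠ 0} => r ^ ((k : ℤ)).natAbs) := hS.subtype _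
  have hsub : (∑' k : {k : ℤ // k ≠ 0}, r ^ ((k : ℤ)).natAbs) ≤ ∑' k : ℤ, r ^ k.natAbs :=
    Summable.tsum_le_tsum_of_inj (fun k : {k : ℤ // k ≠ 0} => (k : ℤ)) Subtype.coe_injective
      (fun c _ => by positivity) (fun b => le_refl _) hsubS hS
  have hsubnn : (0 : ℝ) ≤ ∑' k : {k : ℤ // k ≠ 0}, r ^ ((k : ℤ)).natAbs :=
    tsum_nonneg (fun k => by positivity)
  calc ∑' k : {k : ℤ // k ≠ 0},
        |((k : ℤ) : ℝ) + 1| / |ξ + ((k : ℤ) : ℝ) * Δ| *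
          Real.exp (-2 * π * |ξ + ((k : ℤ) : ℝ) * Δ|)
      ≤ ∑' k : {k : ℤ // k ≠ 0},
          100 * r⁻¹ ^ 2 * (Real.exp (-2 * π * Δ) * r ^ ((k : ℤ)).natAbs) :=
        Summable.tsum_le_tsum (fun k => key Δ ξ hΔ hξ hξΔ (k : ℤ) k.2) hfsum hgsum
    _ = 100 * r⁻¹ ^ 2 * (Real.exp (-2 * π * Δ) *
          ∑' k : {k : ℤ // k ≠ 0}, r ^ ((k : ℤ)).natAbs) := by
        rw [tsum_mul_left, tsum_mul_left]
    _ ≤ 100 * r⁻¹ ^ 2 * (Real.exp (-2 * π * Δ) * ∑' k : ℤ, r ^ k.natAbs) := by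
        apply mul_le_mul_of_nonneg_left _ (by positivity)
        exact mul_le_mul_of_nonneg_left hsub hE.le
    _ = 100 * r⁻¹ ^ 2 * (∑' k : ℤ, r ^ k.natAbs) * Real.exp (-2 * π * Δ) := by ring
end

section
/- For any real $t > 1$, any $\sigma \in (1/2, 1)$ and $d \ge 1$, define $M^{-}_{1}(\theta) = \frac{1}{4\pi}\Big( H_2(-\theta^{1-2\sigma}) + \frac{d(2\sigma-1)}{\sigma(1-\sigma)}\Big)$, $M^{+}_{1}(\theta) = \frac{1}{4\pi}\Big( H_2(\theta^{1-2\sigma}) + \frac{d(2\sigma-1)}{\sigma(1-\sigma)}\Big)$, and $M^{-}_{-1}(\theta) = \frac{1}{\pi}\Big( H_0(-\theta^{1-2\sigma}) + \frac{d(2\sigma-1)}{\sigma(1-\sigma)}\Big)$, where $H_n(x) = \sum_{k \ge 0} x^k/(k+1)^n$. Then the quantity $\lambda = \big( 2(M^{-}_{1}(\theta) + M^{+}_{1}(\theta)) / M^{-}_{-1}(\theta) \big)^{1/2}$ satisfies $1/2 \le \lambda \le 2$ for all $\theta > 1$. -/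
open Real

theorem stmt_19 (θ σ : ℝ) (d : ℕ) (hθ : 1 < θ) (hσ1 : 1 / 2 < σ) (hσ2 : σ < 1)
    (hd : 1 ≤ d)
    (M1m M1p Mm1 lam : ℝ)
    (hM1m : M1m = (1 / (4 * π)) *
      ((∑' k : ℕ, (-(θ ^ (1 - 2 * σ))) ^ k / ((k : ℝ) + 1) ^ 2) +
        d * (2 * σ - 1) / (σ * (1 - σ))))
    (hM1p : M1p = (1 / (4 * π)) *
      ((∑' k : ℕ, (θ ^ (1 - 2 * σ)) ^ k / ((k : ℝ) + 1) ^ 2) +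
        d * (2 * σ - 1) / (σ * (1 - σ))))
    (hMm1 : Mm1 = (1 / π) *
      ((∑' k : ℕ, (-(θ ^ (1 - 2 * σ))) ^ k) + d * (2 * σ - 1) / (σ * (1 - σ))))
    (hlam : lam = Real.sqrt (2 * (M1m + M1p) / Mm1)) :
    1 / 2 ≤ lam ∧ lam ≤ 2 := by
  set x : ℝ := θ ^ (1 - 2 * σ) with hxdef
  have hx0 : 0 < x := Real.rpow_pos_of_pos (by linarith) _
  have hx1 : x < 1 := Real.rpow_lt_one_of_one_lt_of_neg hθ (by linarith)
  set D : ℝ := d * (2 * σ - 1) / (σ * (1 - σ)) with hDdef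
  have hσ0 : 0 < σ := by linarith
  have hD : 0 < D := by
    apply div_pos
    · have : (1 : ℝ) ≤ (d : ℝ) := by exact_mod_cast hd
      nlinarith
    · nlinarith
  -- summability
  have Sgeo : Summable (fun k : ℕ => x ^ k) := summable_geometric_of_lt_one hx0.le hx1
  have hterm : ∀ k : ℕ, x ^ k / ((k : ℝ) + 1) ^ 2 ≤ x ^ k := by
    intro k
    apply div_le_self (pow_nonneg hx0.le _)
    nlinarith [Nat.cast_nonneg (α := ℝ) k]
  have Sb : Summable (fun k : ℕ => x ^ k / ((k : ℝ) + 1) ^ 2) := by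
    apply Summable.of_nonneg_of_le _ hterm Sgeo
    intro k
    positivity
  have Sa : Summable (fun k : ℕ => (-x) ^ k / ((k : ℝ) + 1) ^ 2) := by
    apply Summable.of_norm_bounded Sgeo
    intro k
    rw [norm_div, norm_pow, norm_neg, Real.norm_of_nonneg hx0.le,
      Real.norm_of_nonneg (by positivity)]
    exact hterm k
  set A : ℝ := ∑' k : ℕ, (-x) ^ k / ((k : ℝ) + 1) ^ 2 with hAdef
  set B : ℝ := ∑' k : ℕ, x ^ k / ((k : ℝ) + 1) ^ 2 with hBdef
  -- geometric sum
  have hgeom : (∑' k : ℕ, (-x) ^ k) = (1 + x)⁻¹ := by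
    rw [tsum_geometric_of_norm_lt_one (ξ := -x)
      (by rw [norm_neg, Real.norm_of_nonneg hx0.le]; exact hx1)]
    ring_nf
  set C : ℝ := (1 + x)⁻¹ with hCdef
  have hC1 : C ≤ 1 := by
    rw [hCdef]
    rw [inv_le_one_iff₀]; right; linarith
  have hC2 : 1 / 2 < C := by
    rw [hCdef]
    rw [div_lt_iff₀ (by norm_num : (0:ℝ) < 2)]
    rw [inv_mul_eq_div, lt_div_iff₀ (by linarith : (0:ℝ) < 1 + x)]
    linarith
  -- bound: 2 ≤ A + B
  have hAB2 : 2 ≤ A + B := by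
    rw [hAdef, hBdef, ← Summable.tsum_add Sa Sb]
    have h0 : ((-x) ^ 0 / ((0 : ℕ) + 1 : ℝ) ^ 2 + x ^ 0 / ((0 : ℕ) + 1 : ℝ) ^ 2) = 2 := by
      norm_num
    calc (2 : ℝ) = (-x) ^ 0 / ((0 : ℕ) + 1 : ℝ) ^ 2 + x ^ 0 / ((0 : ℕ) + 1 : ℝ) ^ 2 := h0.symm
    _ ≤ ∑' k : ℕ, ((-x) ^ k / ((k : ℝ) + 1) ^ 2 + x ^ k / ((k : ℝ) + 1) ^ 2) := by
        apply Summable.le_tsum (Sa.add Sb) 0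
        intro k _
        have h1 : -(x ^ k) ≤ (-x) ^ k := by
          have := neg_abs_le ((-x) ^ k)
          rwa [abs_pow, abs_neg, abs_of_nonneg hx0.le] at this
        have h2 : (0:ℝ) < ((k : ℝ) + 1) ^ 2 := by positivity
        have h3 : (0:ℝ) ≤ (-x) ^ k + x ^ k := by linarith
        have := div_nonneg h3 h2.le
        rwa [add_div] at this
  -- Basel upper bound
  have hT : HasSum (fun k : ℕ => 1 / ((k : ℝ) + 1) ^ 2) (π ^ 2 / 6) := by
    have := (hasSum_nat_add_iff' (f := fun n : ℕ => (1 : ℝ) / (n : ℝ) ^ 2) 1).mpr hasSum_zeta_two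
    simpa using this
  have hTval : π ^ 2 / 6 < 2 := by
    nlinarith [Real.pi_lt_d2, Real.pi_pos]
  have hAle : A ≤ π ^ 2 / 6 := by
    rw [hAdef, ← hT.tsum_eq]
    apply Summable.tsum_le_tsum _ Sa hT.summable
    intro k
    apply div_le_div_of_nonneg_right _ (by positivity)
    calc (-x) ^ k ≤ |(-x) ^ k| := le_abs_self _
    _ = x ^ k := by rw [abs_pow, abs_neg, abs_of_nonneg hx0.le]
    _ ≤ 1 := pow_le_one₀ hx0.le hx1.le
  have hBle : B ≤ π ^ 2 / 6 := by
    rw [hBdef, ← hT.tsum_eq]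
    apply Summable.tsum_le_tsum _ Sb hT.summable
    intro k
    apply div_le_div_of_nonneg_right _ (by positivity)
    exact pow_le_one₀ hx0.le hx1.le
  -- rewrite the ratio
  have hπ : 0 < π := Real.pi_pos
  have hMm1' : Mm1 = (1 / π) * (C + D) := by rw [hMm1, hgeom]
  have hCD : 0 < C + D := by linarith
  have hR : 2 * (M1m + M1p) / Mm1 = (A + B + 2 * D) / (2 * (C + D)) := by
    rw [hM1m, hM1p, hMm1']
    field_simp
    ring
  have hRlo : 1 / 4 ≤ (A + B + 2 * D) / (2 * (C + D)) := by
    rw [le_div_iff₀ (by linarith)]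
    linarith
  have hRhi : (A + B + 2 * D) / (2 * (C + D)) ≤ 4 := by
    rw [div_le_iff₀ (by linarith)]
    nlinarith
  constructor
  · rw [hlam, hR]
    have := Real.sqrt_le_sqrt hRlo
    rwa [show (1:ℝ)/4 = (1/2)^2 by norm_num, Real.sqrt_sq (by norm_num)] at this
  · rw [hlam, hR]
    have := Real.sqrt_le_sqrt hRhi
    rwa [show (4:ℝ) = 2^2 by norm_num, Real.sqrt_sq (by norm_num)] at this
end
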